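/- arXiv:2503.00571 — 2 statements merged into one kernel-verified Lean document; each statement's English description precedes it below -/
import Mathlib

section
/- For every a ∈ (0, 1/2) and every ε ∈ (0, 1/2) there exists a constant C > 0 such that for all t > 0, ∫_0^t (t−s)^{−1/2−a} · s^{−1+a} · (1+s)^{ε} ds ≤ C · t^{−1/2} · (1+t)^{ε}. -/
/-!
Since `s ↦ (1 + s) ^ ε` is increasing, the weight is at most `(1 + t) ^ ε` on `(0, t)`. The remaining
kernel integral is a Beta integral: the substitution `s = t u` turns it into
`t ^ (p + q + 1) ∫₀¹ (1 - u) ^ p u ^ q du`, which is finite as `p, q > -1`. With `p = -1/2 - a` and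
`q = -1 + a` the exponent `p + q + 1` is `-1/2`.
-/

open MeasureTheory Set intervalIntegral

theorem intervalIntegrable_one_sub_rpow_mul_rpow_zero_half {p q : ℝ} (hq : -1 < q) :
    IntervalIntegrable (fun u : ℝ => (1 - u) ^ p * u ^ q) volume 0 (1 / 2) := by
  refine (intervalIntegrable_rpow' hq).continuousOn_mul fun u hu => ?_
  rw [uIcc_of_le (by norm_num)] at hu
  exact ((continuousAt_const.sub continuousAt_id).rpow_const
    (Or.inl (by linarith [hu.2] : (0 : ℝ) < 1 - u).ne')).continuousWithinAt

theorem intervalIntegrable_one_sub_rpow_mul_rpow {p q : ℝ} (hp : -1 < p) (hq : -1 < q) :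
    IntervalIntegrable (fun u : ℝ => (1 - u) ^ p * u ^ q) volume 0 1 := by
  refine (intervalIntegrable_one_sub_rpow_mul_rpow_zero_half hq).trans ?_
  have reflected :=
    ((intervalIntegrable_one_sub_rpow_mul_rpow_zero_half (p := q) hp).comp_sub_left 1).symm
  norm_num at reflected
  exact reflected.congr fun u _ => mul_comm _ _

theorem sub_mul_rpow_mul_mul_rpow {p q t x : ℝ} (ht : 0 < t) (hx₀ : 0 ≤ x) (hx₁ : x ≤ 1) :
    (t - t * x) ^ p * (t * x) ^ q = t ^ (p + q) * ((1 - x) ^ p * x ^ q) := by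
  rw [← mul_one_sub, Real.mul_rpow ht.le (by linarith), Real.mul_rpow ht.le hx₀, Real.rpow_add ht]
  ring

theorem intervalIntegrable_sub_rpow_mul_rpow {p q t : ℝ} (hp : -1 < p) (hq : -1 < q) (ht : 0 < t) :
    IntervalIntegrable (fun s : ℝ => (t - s) ^ p * s ^ q) volume 0 t := by
  have rescaled := ((intervalIntegrable_one_sub_rpow_mul_rpow hp hq).comp_mul_left
    (c := t⁻¹)).const_mul (t ^ (p + q))
  simp only [div_inv_eq_mul, zero_mul, one_mul] at rescaled
  refine rescaled.congr fun s hs => ?_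
  rw [uIoc_of_le ht.le] at hs
  obtain ⟨hs₀, hst⟩ := hs
  have hs' : s = t * (t⁻¹ * s) := by field_simp
  conv_rhs => rw [hs']
  rw [sub_mul_rpow_mul_mul_rpow ht (by positivity) ((inv_mul_le_one₀ ht).2 hst)]

theorem integral_sub_rpow_mul_rpow {p q t : ℝ} (ht : 0 < t) :
    ∫ s in (0 : ℝ)..t, (t - s) ^ p * s ^ q =
      t ^ (p + q + 1) * ∫ u in (0 : ℝ)..1, (1 - u) ^ p * u ^ q := by
  have substitution := integral_comp_mul_left (a := 0) (b := 1)
    (fun s : ℝ => (t - s) ^ p * s ^ q) ht.ne'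
  rw [integral_congr fun x hx => sub_mul_rpow_mul_mul_rpow (p := p) (q := q) ht
    (uIcc_of_le (zero_le_one' ℝ) ▸ hx).1 (uIcc_of_le (zero_le_one' ℝ) ▸ hx).2,
    intervalIntegral.integral_const_mul, mul_zero, mul_one, smul_eq_mul] at substitution
  rw [Real.rpow_add_one ht.ne', mul_right_comm, substitution]
  field_simp

theorem setIntegral_sub_rpow_mul_rpow_mul_one_add_rpow_le {p q ε t : ℝ} (hp : -1 < p)
    (hq : -1 < q) (hε : 0 ≤ ε) (ht : 0 < t) :
    ∫ s in Ioo 0 t, (t - s) ^ p * s ^ q * (1 + s) ^ ε ≤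
      (1 + t) ^ ε * (t ^ (p + q + 1) * ∫ u in (0 : ℝ)..1, (1 - u) ^ p * u ^ q) := by
  have kernel_integrable : IntegrableOn (fun s : ℝ => (t - s) ^ p * s ^ q) (Ioo 0 t) :=
    (intervalIntegrable_sub_rpow_mul_rpow hp hq ht).def'.mono_set
      (uIoc_of_le ht.le ▸ Ioo_subset_Ioc_self)
  calc ∫ s in Ioo 0 t, (t - s) ^ p * s ^ q * (1 + s) ^ ε
      ≤ ∫ s in Ioo 0 t, (1 + t) ^ ε * ((t - s) ^ p * s ^ q) := by
        refine integral_mono_of_nonneg ?_ (kernel_integrable.const_mul _) ?_ <;>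
          filter_upwards [ae_restrict_mem measurableSet_Ioo] with s ⟨hs₀, hst⟩
        · have : 0 ≤ t - s := by linarith
          positivity
        · rw [mul_comm]
          gcongr
    _ = (1 + t) ^ ε * (t ^ (p + q + 1) * ∫ u in (0 : ℝ)..1, (1 - u) ^ p * u ^ q) := by
        rw [MeasureTheory.integral_const_mul, ← integral_Ioc_eq_integral_Ioo,
          ← integral_of_le ht.le, integral_sub_rpow_mul_rpow ht]

theorem integral_kernel_gradient_estimate_general (a : ℝ) (ha : 0 < a) (ha' : a < 1/2)
    (ε : ℝ) (hε : 0 < ε) :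
    ∃ C : ℝ, 0 < C ∧ ∀ t : ℝ, 0 < t →
      ∫ s in Ioo (0 : ℝ) t, (t - s) ^ (-1/2 - a) * s ^ (-1 + a) * (1 + s) ^ ε ≤
        C * t ^ (-1/2 : ℝ) * (1 + t) ^ ε := by
  set K := ∫ u in (0 : ℝ)..1, (1 - u) ^ (-1/2 - a) * u ^ (-1 + a)
  have hK : 0 ≤ K := integral_nonneg zero_le_one fun u hu =>
    mul_nonneg (Real.rpow_nonneg (by linarith [hu.2]) _) (Real.rpow_nonneg hu.1 _)
  refine ⟨K + 1, by linarith, fun t ht => ?_⟩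
  have bound := setIntegral_sub_rpow_mul_rpow_mul_one_add_rpow_le (p := -1/2 - a) (q := -1 + a)
    (by linarith) (by linarith) hε.le ht
  rw [show -1/2 - a + (-1 + a) + 1 = (-1/2 : ℝ) by ring] at bound
  calc _ ≤ _ := bound
    _ = K * (t ^ (-1/2 : ℝ) * (1 + t) ^ ε) := by ring
    _ ≤ (K + 1) * (t ^ (-1/2 : ℝ) * (1 + t) ^ ε) := by gcongr; linarith
    _ = _ := by ring

/-- **Gradient-term kernel estimate.**
For every `a ∈ (0, 1/2)` and `ε ∈ (0, 1/2)` there is `C > 0` such that for all `t > 0`,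
`∫_0^t (t-s)^(-1/2-a) s^(-1+a) (1+s)^ε ds ≤ C t^(-1/2) (1+t)^ε`. -/
theorem integral_kernel_gradient_estimate (a : ℝ) (ha : 0 < a) (ha' : a < 1/2)
    (ε : ℝ) (hε : 0 < ε) (hε' : ε < 1/2) :
    ∃ C : ℝ, 0 < C ∧ ∀ t : ℝ, 0 < t →
      ∫ s in Ioo (0 : ℝ) t, (t - s) ^ (-1/2 - a) * s ^ (-1 + a) * (1 + s) ^ ε ≤
        C * t ^ (-1/2 : ℝ) * (1 + t) ^ ε :=
  integral_kernel_gradient_estimate_general a ha ha' ε hε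
end

section
/- Let T ∈ (0, ∞], θ > 0, K ≥ 0, and let f : (0, T) → [0, ∞) be measurable with esssup_{s ∈ (0, t)} f(s) < ∞ for every t ∈ (0, T). Assume that for every τ ∈ [0, T), if f = 0 almost everywhere on (0, τ), then f(t) ≤ K · (t−τ)^{θ} · esssup_{s ∈ (τ, t)} f(s) for almost every t ∈ (τ, T). Then f = 0 almost everywhere on (0, T). -/
/-!
Choose `δ > 0` with `K δ^θ < 1`. If `f` vanishes a.e. on `(0, τ)`, then on `(τ, τ + δ)` the
hypothesis gives `f ≤ K δ^θ · M` a.e., where `M` is the essential supremum of `f` over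
`(τ, τ + δ)`; taking the essential supremum yields `M ≤ K δ^θ M`, so `M = 0`. Since `δ` does not
depend on `τ`, finitely many such steps reach any `t₀ < T`.
-/

open MeasureTheory Set ENNReal Filter Topology

lemma ae_restrict_Ioo_of_Ioo_of_Ioo {α : Type*} [MeasurableSpace α] [LinearOrder α]
    {μ : Measure α} [NullSingletonClass μ] {P : α → Prop} {a b c : α}
    (hab : ∀ᵐ x ∂μ.restrict (Ioo a b), P x) (hbc : ∀ᵐ x ∂μ.restrict (Ioo b c), P x) :
    ∀ᵐ x ∂μ.restrict (Ioo a c), P x := by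
  have hcover : Ioo a c ⊆ Ioc a b ∪ Ioo b c := fun x ⟨hax, hxc⟩ =>
    (le_or_gt x b).imp (fun hxb => ⟨hax, hxb⟩) fun hbx => ⟨hbx, hxc⟩
  refine ae_restrict_of_ae_restrict_of_subset hcover ?_
  exact (ae_restrict_union_iff _ _ P).2 ⟨(ae_restrict_congr_set Ioo_ae_eq_Ioc).1 hab, hbc⟩

lemma ae_restrict_of_forall_ae_restrict_Ioo_zero {μ : Measure ℝ} {T : ℝ≥0∞} {P : ℝ → Prop}
    (h : ∀ t : ℝ, 0 < t → ENNReal.ofReal t < T → ∀ᵐ s ∂μ.restrict (Ioo 0 t), P s) :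
    ∀ᵐ s ∂μ.restrict {s : ℝ | 0 < s ∧ ENNReal.ofReal s < T}, P s := by
  set Q := {q : ℚ | 0 < (q : ℝ) ∧ ENNReal.ofReal q < T}
  refine ae_restrict_of_ae_restrict_of_subset (t := ⋃ q ∈ Q, Ioo 0 (q : ℝ)) ?_
    ((ae_restrict_biUnion_iff _ Q.to_countable P).2 fun q hq => h q hq.1 hq.2)
  rintro x ⟨hx, hxT⟩
  obtain ⟨q, -, hxq, hqT⟩ := ENNReal.lt_iff_exists_rat_btwn.1 hxT
  have hxq : x < q := (ENNReal.ofReal_lt_ofReal_iff'.1 hxq).1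
  exact mem_biUnion (x := q) ⟨hx.trans hxq, hqT⟩ ⟨hx, hxq⟩

lemma exists_pos_mul_rpow_lt_one (K : ℝ) {θ : ℝ} (hθ : 0 < θ) : ∃ δ > 0, K * δ ^ θ < 1 := by
  have hlim : Tendsto (fun δ : ℝ => K * δ ^ θ) (𝓝[>] 0) (𝓝 0) := by
    simpa [Real.zero_rpow hθ.ne'] using
      ((Real.continuousAt_rpow_const 0 θ (Or.inr hθ.le)).tendsto.const_mul K).mono_left
        nhdsWithin_le_nhds
  exact ((hlim.eventually (gt_mem_nhds one_pos)).and self_mem_nhdsWithin).exists.imp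
    fun δ h => ⟨h.2, h.1⟩

lemma essSup_nonneg_of_ae_nonneg {α : Type*} [MeasurableSpace α] {μ : Measure α} {f : α → ℝ}
    (hμ : μ ≠ 0) (hnn : ∀ᵐ x ∂μ, 0 ≤ f x) (hbdd : IsBoundedUnder (· ≤ ·) (ae μ) f) :
    0 ≤ essSup f μ :=
  have : (ae μ).NeBot := ae_neBot.2 hμ
  have ⟨_, hx, hxM⟩ := (hnn.and (ae_le_essSup hbdd)).exists
  hx.trans hxM

lemma volume_restrict_Ioo_ne_zero {a b : ℝ} (hab : a < b) : volume.restrict (Ioo a b) ≠ 0 := by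
  simpa [Measure.restrict_eq_zero] using hab

lemma ae_restrict_Ioo_eq_zero_of_le_mul_essSup {f g : ℝ → ℝ} {τ b r : ℝ} (hr : r < 1)
    (hg : ∀ t ∈ Ioo τ b, 0 ≤ g t ∧ g t ≤ r)
    (hnn : ∀ᵐ s ∂volume.restrict (Ioo τ b), 0 ≤ f s)
    (hbdd : IsBoundedUnder (· ≤ ·) (ae (volume.restrict (Ioo τ b))) f)
    (hle : ∀ᵐ t ∂volume.restrict (Ioo τ b),
      f t ≤ g t * essSup f (volume.restrict (Ioo τ t))) :
    ∀ᵐ s ∂volume.restrict (Ioo τ b), f s = 0 := by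
  rcases le_or_gt b τ with hbτ | hτb
  · simp [Ioo_eq_empty_of_le hbτ]
  set M := essSup f (volume.restrict (Ioo τ b))
  have hsub : ∀ t ∈ Ioo τ b, 0 ≤ essSup f (volume.restrict (Ioo τ t)) ∧
      essSup f (volume.restrict (Ioo τ t)) ≤ M := by
    intro t ht
    have hmono : volume.restrict (Ioo τ t) ≤ volume.restrict (Ioo τ b) :=
      Measure.restrict_mono (Ioo_subset_Ioo_right ht.2.le) le_rfl
    have hnn' := hnn.filter_mono (ae_mono hmono)
    have : (ae (volume.restrict (Ioo τ t))).NeBot := ae_neBot.2 (volume_restrict_Ioo_ne_zero ht.1)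
    exact ⟨essSup_nonneg_of_ae_nonneg (volume_restrict_Ioo_ne_zero ht.1) hnn'
        (hbdd.mono (ae_mono hmono)),
      essSup_mono_measure' hmono (isCoboundedUnder_le_of_eventually_le _ hnn') hbdd⟩
  have hfM : ∀ᵐ t ∂volume.restrict (Ioo τ b), f t ≤ r * M := by
    filter_upwards [hle, ae_restrict_mem measurableSet_Ioo] with t hft ht
    obtain ⟨hg0, hgr⟩ := hg t ht
    obtain ⟨hE0, hEM⟩ := hsub t ht
    exact hft.trans (mul_le_mul hgr hEM hE0 (hg0.trans hgr))
  have : (ae (volume.restrict (Ioo τ b))).NeBot := ae_neBot.2 (volume_restrict_Ioo_ne_zero hτb)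
  have hM0 : 0 ≤ M := essSup_nonneg_of_ae_nonneg (volume_restrict_Ioo_ne_zero hτb) hnn hbdd
  have hMr : M ≤ r * M := essSup_le_of_ae_le _ hfM (isCoboundedUnder_le_of_eventually_le _ hnn)
  have hM : M = 0 := by nlinarith
  filter_upwards [hnn, ae_le_essSup hbdd] with s hs0 hsM
  linarith

lemma ae_restrict_Ioo_zero_eq_zero_of_le_add {T : ℝ≥0∞} {θ K : ℝ} (hθ : 0 ≤ θ) (hK : 0 ≤ K)
    {f : ℝ → ℝ}
    (hf0 : ∀ s : ℝ, 0 < s → ENNReal.ofReal s < T → 0 ≤ f s)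
    (hprop : ∀ τ : ℝ, 0 ≤ τ → ENNReal.ofReal τ < T →
      (∀ᵐ s ∂volume.restrict (Ioo 0 τ), f s = 0) →
      ∀ᵐ t ∂volume.restrict {t : ℝ | τ < t ∧ ENNReal.ofReal t < T},
        f t ≤ K * (t - τ) ^ θ * essSup f (volume.restrict (Ioo τ t)))
    {τ b δ : ℝ} (hτ : 0 ≤ τ) (hτb : τ ≤ b) (hbT : ENNReal.ofReal b < T) (hbδ : b ≤ τ + δ)
    (hKδ : K * δ ^ θ < 1) (hbdd : IsBoundedUnder (· ≤ ·) (ae (volume.restrict (Ioo τ b))) f)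
    (hτ0 : ∀ᵐ s ∂volume.restrict (Ioo 0 τ), f s = 0) :
    ∀ᵐ s ∂volume.restrict (Ioo 0 b), f s = 0 := by
  have hT : ∀ s ∈ Ioo τ b, τ < s ∧ ENNReal.ofReal s < T := fun s hs =>
    ⟨hs.1, (ENNReal.ofReal_le_ofReal hs.2.le).trans_lt hbT⟩
  have hnn : ∀ᵐ s ∂volume.restrict (Ioo τ b), 0 ≤ f s :=
    ae_restrict_of_forall_mem measurableSet_Ioo fun s hs =>
      hf0 s (hτ.trans_lt hs.1) (hT s hs).2
  have hle := ae_restrict_of_ae_restrict_of_subset hT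
    (hprop τ hτ ((ENNReal.ofReal_le_ofReal hτb).trans_lt hbT) hτ0)
  refine ae_restrict_Ioo_of_Ioo_of_Ioo hτ0
    (ae_restrict_Ioo_eq_zero_of_le_mul_essSup hKδ (fun t ht => ⟨?_, ?_⟩) hnn hbdd hle)
  · exact mul_nonneg hK (Real.rpow_nonneg (sub_nonneg.2 ht.1.le) θ)
  · gcongr
    · exact sub_nonneg.2 ht.1.le
    · linarith [ht.2]

lemma ae_restrict_Ioo_zero_eq_zero {T : ℝ≥0∞} {θ K : ℝ} (hθ : 0 < θ) (hK : 0 ≤ K)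
    {f : ℝ → ℝ}
    (hf0 : ∀ s : ℝ, 0 < s → ENNReal.ofReal s < T → 0 ≤ f s)
    (hbdd : ∀ t : ℝ, 0 < t → ENNReal.ofReal t < T →
      ∃ C : ℝ, ∀ᵐ s ∂volume.restrict (Ioo 0 t), f s ≤ C)
    (hprop : ∀ τ : ℝ, 0 ≤ τ → ENNReal.ofReal τ < T →
      (∀ᵐ s ∂volume.restrict (Ioo 0 τ), f s = 0) →
      ∀ᵐ t ∂volume.restrict {t : ℝ | τ < t ∧ ENNReal.ofReal t < T},
        f t ≤ K * (t - τ) ^ θ * essSup f (volume.restrict (Ioo τ t)))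
    {t₀ : ℝ} (ht₀ : 0 < t₀) (ht₀T : ENNReal.ofReal t₀ < T) :
    ∀ᵐ s ∂volume.restrict (Ioo 0 t₀), f s = 0 := by
  obtain ⟨δ, hδ, hKδ⟩ := exists_pos_mul_rpow_lt_one K hθ
  obtain ⟨C, hC⟩ := hbdd t₀ ht₀ ht₀T
  have hsteps : ∀ n : ℕ, ∀ᵐ s ∂volume.restrict (Ioo 0 (min (n * δ) t₀)), f s = 0 := by
    intro n
    induction n with
    | zero => simp
    | succ n ih =>
      refine ae_restrict_Ioo_zero_eq_zero_of_le_add hθ.le hK hf0 hprop (by positivity)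
        (by gcongr; linarith) ((ENNReal.ofReal_le_ofReal (min_le_right _ _)).trans_lt ht₀T)
        (by push_cast; grind) hKδ ⟨C, ae_restrict_of_ae_restrict_of_subset ?_ hC⟩ ih
      exact Ioo_subset_Ioo (by positivity) (min_le_right _ _)
  obtain ⟨n, hn⟩ := exists_nat_gt (t₀ / δ)
  simpa [min_eq_right ((div_lt_iff₀ hδ).1 hn).le] using hsteps n

theorem vanishing_propagation_general (T : ℝ≥0∞) (θ K : ℝ) (hθ : 0 < θ) (hK : 0 ≤ K)
    (f : ℝ → ℝ)
    (hf0 : ∀ s : ℝ, 0 < s → ENNReal.ofReal s < T → 0 ≤ f s)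
    (hbdd : ∀ t : ℝ, 0 < t → ENNReal.ofReal t < T →
      ∃ C : ℝ, ∀ᵐ s ∂volume.restrict (Ioo 0 t), f s ≤ C)
    (hprop : ∀ τ : ℝ, 0 ≤ τ → ENNReal.ofReal τ < T →
      (∀ᵐ s ∂volume.restrict (Ioo 0 τ), f s = 0) →
      ∀ᵐ t ∂volume.restrict {t : ℝ | τ < t ∧ ENNReal.ofReal t < T},
        f t ≤ K * (t - τ) ^ θ * essSup f (volume.restrict (Ioo τ t))) :
    ∀ᵐ s ∂volume.restrict {s : ℝ | 0 < s ∧ ENNReal.ofReal s < T}, f s = 0 :=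
  ae_restrict_of_forall_ae_restrict_Ioo_zero fun _ ht htT =>
    ae_restrict_Ioo_zero_eq_zero hθ hK hf0 hbdd hprop ht htT

/-- **Propagation-of-vanishing (Fujita–Kato) argument.**
Let `T ∈ (0, ∞]`, `θ > 0`, `K ≥ 0` and let `f : (0,T) → [0,∞)` be measurable and
essentially bounded on `(0,t)` for every `t ∈ (0,T)`.  If vanishing of `f` a.e. on
`(0,τ)` always implies `f t ≤ K (t-τ)^θ · esssup_{(τ,t)} f` for a.e. `t ∈ (τ,T)`, then
`f = 0` a.e. on `(0,T)`. -/
theorem vanishing_propagation (T : ℝ≥0∞) (hT : 0 < T) (θ K : ℝ) (hθ : 0 < θ) (hK : 0 ≤ K)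
    (f : ℝ → ℝ)
    (hf0 : ∀ s : ℝ, 0 < s → ENNReal.ofReal s < T → 0 ≤ f s)
    (hfm : AEMeasurable f (volume.restrict {s : ℝ | 0 < s ∧ ENNReal.ofReal s < T}))
    (hbdd : ∀ t : ℝ, 0 < t → ENNReal.ofReal t < T →
      ∃ C : ℝ, ∀ᵐ s ∂volume.restrict (Ioo 0 t), f s ≤ C)
    (hprop : ∀ τ : ℝ, 0 ≤ τ → ENNReal.ofReal τ < T →
      (∀ᵐ s ∂volume.restrict (Ioo 0 τ), f s = 0) →
      ∀ᵐ t ∂volume.restrict {t : ℝ | τ < t ∧ ENNReal.ofReal t < T},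
        f t ≤ K * (t - τ) ^ θ * essSup f (volume.restrict (Ioo τ t))) :
    ∀ᵐ s ∂volume.restrict {s : ℝ | 0 < s ∧ ENNReal.ofReal s < T}, f s = 0 :=
  vanishing_propagation_general T θ K hθ hK f hf0 hbdd hprop
end
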